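/- Let n be a positive integer, σ > 0 and δ > 0 be real numbers with 12·n·σ ≤ δ. Let (Ω, P) be a probability space carrying a jointly independent family of real random variables: for each i < n a variable GS̄_i with law N(∑_{j<n} G_{ij}, σ²), and for each pair i, j < n a variable Ḡ_{ij} with law N(G_{ij}, σ²), where G : Fin n × Fin n → ℝ is a fixed matrix of target conductances. Let A : Fin n → ℝ be inputs with 0 ≤ A_i ≤ 1 for all i. Define D̄S = ∑_{i<n} A_i · GS̄_i and D̄ = ∑_{j<n} ∑_{i<n} A_i · Ḡ_{ij}. Then P(|D̄ − D̄S| ≤ δ) ≥ 1 − 4·10⁻⁹. -/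

import Mathlib

/-!
With weights `w = checkWeight A` (`-A i` on the check device of row `i`, `A i` on each cell
`(i, j)`), `D̄ - D̄S = ∑ k, w k * X k`, and the weights annihilate the means `m = deviceMean G`
because the check device of row `i` is centred at the sum of that row of `G`. Hence
`D̄ - D̄S = ∑ k, w k * (X k - m k)` is a sum of independent centred Gaussians, sub-Gaussian with
variance proxy `σ² ∑ k, w k ² ≤ σ² n (n + 1) ≤ 2 n² σ²`. The two-sided Chernoff bound gives
`P(|D̄ - D̄S| > δ) ≤ 2 exp (-δ² / (4 n² σ²)) ≤ 2 e⁻³⁶ < 4·10⁻⁹` as soon as `12 n σ ≤ δ`.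
-/

open MeasureTheory ProbabilityTheory
open scoped NNReal

namespace ProbabilityTheory

variable {Ω : Type*} [MeasurableSpace Ω] {P : Measure Ω}

lemma hasSubgaussianMGF_id_gaussianReal_zero (v : ℝ≥0) :
    HasSubgaussianMGF id v (gaussianReal 0 v) where
  integrable_exp_mul t := integrable_exp_mul_gaussianReal t
  mgf_le t := by simp [mgf_id_gaussianReal]

lemma HasLaw.hasSubgaussianMGF_sub_of_gaussianReal {X : Ω → ℝ} {μ : ℝ} {v : ℝ≥0}
    (hX : HasLaw X (gaussianReal μ v) P) : HasSubgaussianMGF (fun ω ↦ X ω - μ) v P := by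
  have hcentered := gaussianReal_sub_const hX μ
  rw [sub_self] at hcentered
  rw [← HasSubgaussianMGF.id_map_iff hcentered.aemeasurable, hcentered.map_eq]
  exact hasSubgaussianMGF_id_gaussianReal_zero v

lemma HasSubgaussianMGF.mono {X : Ω → ℝ} {c c' : ℝ≥0} (h : HasSubgaussianMGF X c P)
    (hc : c ≤ c') : HasSubgaussianMGF X c' P where
  integrable_exp_mul := h.integrable_exp_mul
  mgf_le t := (h.mgf_le t).trans (Real.exp_le_exp.2 (by gcongr))

lemma hasSubgaussianMGF_sum_mul_sub_of_iIndepFun_gaussianReal {ι : Type*} [Fintype ι]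
    {X : ι → Ω → ℝ} (hindep : iIndepFun X P) {m : ι → ℝ} {v : ι → ℝ≥0}
    (hlaw : ∀ k, HasLaw (X k) (gaussianReal (m k) (v k)) P) (w : ι → ℝ) {c : ℝ≥0}
    (hc : ∑ k, w k ^ 2 * (v k : ℝ) ≤ c) :
    HasSubgaussianMGF (fun ω ↦ ∑ k, w k * (X k ω - m k)) c P := by
  refine (HasSubgaussianMGF.sum_of_iIndepFun
    (hindep.comp (fun k x ↦ w k * (x - m k)) fun k ↦ by fun_prop)
    fun k _ ↦ (hlaw k).hasSubgaussianMGF_sub_of_gaussianReal.const_mul (w k)).mono ?_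
  rw [← NNReal.coe_le_coe]
  push_cast
  exact hc

namespace HasSubgaussianMGF

lemma one_sub_two_mul_exp_le_measureReal_abs_le [IsProbabilityMeasure P] {X : Ω → ℝ}
    {c : ℝ≥0} (h : HasSubgaussianMGF X c P) {ε : ℝ} (hε : 0 ≤ ε) :
    1 - 2 * Real.exp (-ε ^ 2 / (2 * c)) ≤ P.real {ω | |X ω| ≤ ε} := by
  have hcompl : {ω | |X ω| ≤ ε}ᶜ ⊆ {ω | ε ≤ X ω} ∪ {ω | ε ≤ (-X) ω} := by
    intro ω (hω : ¬|X ω| ≤ ε)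
    rcases le_abs'.1 (not_le.1 hω).le with hneg | hpos
    · exact Or.inr (show ε ≤ -X ω by linarith)
    · exact Or.inl (show ε ≤ X ω from hpos)
  have hnull : NullMeasurableSet {ω | |X ω| ≤ ε} P :=
    nullMeasurableSet_le h.aemeasurable.abs aemeasurable_const
  have htails := (measureReal_mono (μ := P) hcompl).trans (measureReal_union_le _ _)
  rw [measureReal_compl₀ hnull, probReal_univ] at htails
  linarith [h.measure_ge_le hε, h.neg.measure_ge_le hε]

end HasSubgaussianMGF

end ProbabilityTheory

lemma two_mul_exp_neg_36_le : 2 * Real.exp (-36) ≤ 4 / 10 ^ 9 := by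
  have h : (2 : ℝ) ^ 36 ≤ Real.exp 36 := by
    have hpow := Real.exp_one_pow 36
    push_cast at hpow
    rw [← hpow]
    gcongr
    linarith [Real.exp_one_gt_d9]
  rw [Real.exp_neg, ← div_eq_mul_inv, div_le_div_iff₀ (Real.exp_pos _) (by norm_num)]
  linarith

section CheckWeight

variable {n : ℕ}

def checkWeight (A : Fin n → ℝ) : Fin n ⊕ Fin n × Fin n → ℝ :=
  Sum.elim (fun i ↦ -A i) (fun p ↦ A p.1)

def deviceMean (G : Fin n × Fin n → ℝ) : Fin n ⊕ Fin n × Fin n → ℝ :=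
  Sum.elim (fun i ↦ ∑ j, G (i, j)) G

lemma sum_checkWeight_mul (A : Fin n → ℝ) (x : Fin n ⊕ Fin n × Fin n → ℝ) :
    ∑ k, checkWeight A k * x k =
      ∑ j, ∑ i, A i * x (.inr (i, j)) - ∑ i, A i * x (.inl i) := by
  simp only [Fintype.sum_sum_type, Fintype.sum_prod_type, checkWeight, Sum.elim_inl,
    Sum.elim_inr, neg_mul, Finset.sum_neg_distrib]
  rw [Finset.sum_comm]
  ring

lemma sum_checkWeight_mul_deviceMean (A : Fin n → ℝ) (G : Fin n × Fin n → ℝ) :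
    ∑ k, checkWeight A k * deviceMean G k = 0 := by
  simp only [sum_checkWeight_mul, deviceMean, Sum.elim_inl, Sum.elim_inr, Finset.mul_sum]
  rw [Finset.sum_comm, sub_self]

lemma sum_checkWeight_sq_le (A : Fin n → ℝ) (hA : ∀ i, |A i| ≤ 1) :
    ∑ k, checkWeight A k ^ 2 ≤ n * (n + 1) := by
  have hsq : ∑ i, A i ^ 2 ≤ n := by
    simpa using Finset.sum_le_sum (s := Finset.univ) fun i _ ↦
      (sq_le_one_iff_abs_le_one (A i)).2 (hA i)
  simp only [Fintype.sum_sum_type, Fintype.sum_prod_type, checkWeight, Sum.elim_inl,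
    Sum.elim_inr, neg_sq, Finset.sum_const, Finset.card_univ, Fintype.card_fin, nsmul_eq_mul]
  rw [← Finset.mul_sum]
  nlinarith

end CheckWeight

/-- The paper's Lemma 1 (FAT-PIM error-detection guarantee).  The jointly
independent family `X` carries the implemented `Sum` devices `X (.inl i) = GS̄ i`
with law `N(∑ j, G (i, j), σ²)` and the implemented data cells
`X (.inr (i, j)) = Ḡ (i, j)` with law `N(G (i, j), σ²)`.  If `12 n σ ≤ δ` and the
inputs `A i` are normalized to `[0, 1]`, then the total column sum
`D̄ = ∑ j ∑ i, A i * Ḡ (i, j)` and the row-check sum `D̄S = ∑ i, A i * GS̄ i` agree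
within the tolerance `δ` with probability at least `1 - 4·10⁻⁹`. -/
theorem fatpim_error_detection {Ω : Type*} [MeasurableSpace Ω]
    (P : Measure Ω) [IsProbabilityMeasure P]
    (n : ℕ) (hn : 0 < n) (σ : ℝ≥0) (hσ : 0 < σ) (δ : ℝ) (hδ : 0 < δ)
    (hnσδ : 12 * n * (σ : ℝ) ≤ δ)
    (G : Fin n × Fin n → ℝ)
    (X : (Fin n ⊕ Fin n × Fin n) → Ω → ℝ) (hXmeas : ∀ k, Measurable (X k))
    (hindep : iIndepFun X P)
    (hlawGS : ∀ i : Fin n, P.map (X (.inl i)) = gaussianReal (∑ j, G (i, j)) (σ ^ 2))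
    (hlawG : ∀ p : Fin n × Fin n, P.map (X (.inr p)) = gaussianReal (G p) (σ ^ 2))
    (A : Fin n → ℝ) (hA : ∀ i, 0 ≤ A i ∧ A i ≤ 1) :
    ENNReal.ofReal (1 - 4 / 10 ^ 9) ≤
      P {ω | |(∑ j, ∑ i, A i * X (.inr (i, j)) ω) - ∑ i, A i * X (.inl i) ω| ≤ δ} := by
  have hlaw (k) : HasLaw (X k) (gaussianReal (deviceMean G k) (σ ^ 2)) P := by
    rcases k with i | p
    exacts [⟨(hXmeas _).aemeasurable, hlawGS i⟩, ⟨(hXmeas _).aemeasurable, hlawG p⟩]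
  have hdiff (ω) : ∑ k, checkWeight A k * (X k ω - deviceMean G k)
      = (∑ j, ∑ i, A i * X (.inr (i, j)) ω) - ∑ i, A i * X (.inl i) ω := by
    simp only [mul_sub, Finset.sum_sub_distrib, sum_checkWeight_mul_deviceMean, sub_zero,
      sum_checkWeight_mul A (X · ω)]
  have hvar :
      ∑ k, checkWeight A k ^ 2 * ((σ ^ 2 : ℝ≥0) : ℝ) ≤ (2 * n ^ 2 * σ ^ 2 : ℝ≥0) := by
    push_cast
    rw [← Finset.sum_mul]
    have hn1 : (1 : ℝ) ≤ n := by exact_mod_cast hn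
    have hweights := sum_checkWeight_sq_le A fun i ↦ abs_le.2 ⟨by linarith [hA i], (hA i).2⟩
    gcongr
    nlinarith
  have hsubG := hasSubgaussianMGF_sum_mul_sub_of_iIndepFun_gaussianReal hindep hlaw
    (checkWeight A) hvar
  have hexponent : -δ ^ 2 / (2 * ↑(2 * n ^ 2 * σ ^ 2 : ℝ≥0)) ≤ -36 := by
    push_cast
    rw [div_le_iff₀ (by positivity)]
    have hnσ : 0 ≤ 12 * n * (σ : ℝ) := by positivity
    nlinarith
  rw [← ofReal_measureReal]
  refine ENNReal.ofReal_le_ofReal ?_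
  simp_rw [← hdiff]
  calc 1 - 4 / 10 ^ 9 ≤ 1 - 2 * Real.exp (-36) := by linarith [two_mul_exp_neg_36_le]
    _ ≤ _ := by gcongr
    _ ≤ _ := hsubG.one_sub_two_mul_exp_le_measureReal_abs_le hδ.le
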